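/- Let μ_k = λ[l_k, r_k] (normalized Lebesgue measure on [l_k,r_k]) for k = 1,…,N, suppose C = Σ_k (l_k + r_k)/2, and suppose r_k − l_k ≤ Σ_{i≠k} (r_i − l_i) for every k. Then (μ₁,…,μ_N) ∈ V^N[C], i.e., there is a C-compatible boundary (l⃗, r⃗′) with μ_k ∈ D[l_k, r′_k] for all k and Σ_k 𝔼(μ_k) = C. -/

import Mathlib

open MeasureTheory

/-- `μ ∈ D[l,r]`: `μ = α·δ_l + ρ(x)dx` where `ρ` is nonnegative, nonincreasing on `[l,r]`
and vanishes outside `[l,r]` (the absolutely continuous part has total mass `1 − α`). -/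
def memD (l r : ℝ) (μ : Measure ℝ) : Prop :=
  ∃ α : ℝ, 0 ≤ α ∧ α ≤ 1 ∧ ∃ ρ : ℝ → ℝ,
    (∀ x, 0 ≤ ρ x) ∧ AntitoneOn ρ (Set.Icc l r) ∧ (∀ x ∉ Set.Icc l r, ρ x = 0) ∧
    μ = (ENNReal.ofReal α) • Measure.dirac l
          + volume.withDensity (fun x => ENNReal.ofReal (ρ x))

/-- `μ ∈ D_AC[l,r]`: `μ = ρ(x)dx` with `ρ` nonnegative, nonincreasing on `[l,r]`, vanishing
outside `[l,r]`. -/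
def memDAC (l r : ℝ) (μ : Measure ℝ) : Prop :=
  ∃ ρ : ℝ → ℝ,
    (∀ x, 0 ≤ ρ x) ∧ AntitoneOn ρ (Set.Icc l r) ∧ (∀ x ∉ Set.Icc l r, ρ x = 0) ∧
    μ = volume.withDensity (fun x => ENNReal.ofReal (ρ x))

/-- `λ[l,t]`: normalized Lebesgue measure on `[l,t]` for `l < t`, and `δ_l` for `t = l`. -/
noncomputable def lam (l t : ℝ) : Measure ℝ :=
  if l < t then (ENNReal.ofReal (t - l))⁻¹ • volume.restrict (Set.Icc l t)
  else Measure.dirac l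


/-- A pair of N-tuples (l, r) is a C-compatible boundary if 0 ≤ r_k − l_k ≤ C − Σᵢ lᵢ. -/
def CompatBoundary {N : ℕ} (C : ℝ) (l r : Fin N → ℝ) : Prop :=
  ∀ k, 0 ≤ r k - l k ∧ r k - l k ≤ C - ∑ i, l i

/-- The tuple μ belongs to V^N[C]: Σ 𝔼(μ_k) = C and μ_k ∈ D[l_k,r_k] for some C-compatible
boundary (l,r). -/
def memV {N : ℕ} (C : ℝ) (μ : Fin N → MeasureTheory.Measure ℝ) : Prop :=
  (∑ k, ∫ x, x ∂(μ k)) = C ∧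
  ∃ l r : Fin N → ℝ, CompatBoundary C l r ∧ ∀ k, memD (l k) (r k) (μ k)

/-! The boundary `(l, r)` of the intervals themselves works: each `λ[l_k, r_k]` has a constant
density on `[l_k, r_k]` (or is `δ_{l_k}`) and mean `(l_k + r_k)/2`, so `C − Σ lᵢ = ½ Σ (rᵢ − lᵢ)`
and compatibility `r_k − l_k ≤ ½ Σ (rᵢ − lᵢ)` is the hypothesis rearranged. -/

lemma memD_dirac (l r : ℝ) : memD l r (Measure.dirac l) :=
  ⟨1, zero_le_one, le_rfl, fun _ => 0, fun _ => le_rfl, antitoneOn_const, fun _ _ => rfl,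
    by simp⟩

lemma memD_smul_restrict_Icc (l r : ℝ) {c : ℝ} (hc : 0 ≤ c) :
    memD l r (ENNReal.ofReal c • volume.restrict (Set.Icc l r)) := by
  refine ⟨0, le_rfl, zero_le_one, (Set.Icc l r).indicator fun _ => c,
    fun x => Set.indicator_nonneg (fun _ _ => hc) x, ?_,
    fun x hx => Set.indicator_of_notMem hx _, ?_⟩
  · intro a ha b hb _
    rw [Set.indicator_of_mem ha, Set.indicator_of_mem hb]
  · have hdensity : (fun x => ENNReal.ofReal ((Set.Icc l r).indicator (fun _ => c) x)) =
        (Set.Icc l r).indicator fun _ => ENNReal.ofReal c :=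
      (Set.indicator_comp_of_zero ENNReal.ofReal_zero).symm
    rw [hdensity, withDensity_indicator measurableSet_Icc, withDensity_const]
    simp

lemma memD_lam {l t : ℝ} (h : l ≤ t) : memD l t (lam l t) := by
  rcases h.lt_or_eq with hlt | rfl
  · rw [lam, if_pos hlt, ← ENNReal.ofReal_inv_of_pos (sub_pos.mpr hlt)]
    exact memD_smul_restrict_Icc l t (inv_nonneg.mpr (sub_pos.mpr hlt).le)
  · rw [lam, if_neg (lt_irrefl l)]
    exact memD_dirac l l

lemma integral_id_lam {l t : ℝ} (h : l ≤ t) : ∫ x, x ∂(lam l t) = (l + t) / 2 := by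
  rcases h.lt_or_eq with hlt | rfl
  · have hpos : 0 < t - l := sub_pos.mpr hlt
    rw [lam, if_pos hlt, integral_smul_measure, integral_Icc_eq_integral_Ioc,
      ← intervalIntegral.integral_of_le h, integral_id, ENNReal.toReal_inv,
      ENNReal.toReal_ofReal hpos.le, smul_eq_mul]
    field_simp [hpos.ne']
    ring
  · rw [lam, if_neg (lt_irrefl l), integral_dirac]
    ring

lemma le_half_sum_of_le_sum_erase {ι : Type*} [DecidableEq ι] {s : Finset ι} {k : ι}
    (hk : k ∈ s) {f : ι → ℝ} (h : f k ≤ ∑ i ∈ s.erase k, f i) : f k ≤ (∑ i ∈ s, f i) / 2 := by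
  rw [← Finset.add_sum_erase s f hk]
  linarith

/-- a tuple of normalized Lebesgue measures with C = Σ (l_k+r_k)/2 and
r_k − l_k ≤ Σ_{i≠k}(r_i − l_i) belongs to V^N[C]. -/
theorem stmt12 {N : ℕ} (l r : Fin N → ℝ) (hlr : ∀ k, l k ≤ r k) (C : ℝ)
    (μ : Fin N → Measure ℝ) (hμ : ∀ k, μ k = lam (l k) (r k))
    (hC : C = ∑ k, (l k + r k) / 2)
    (hineq : ∀ k, r k - l k ≤ ∑ i ∈ Finset.univ.erase k, (r i - l i)) :
    memV C μ := by
  have hslack : C - ∑ i, l i = (∑ i, (r i - l i)) / 2 := by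
    rw [hC, Finset.sum_div, ← Finset.sum_sub_distrib]
    exact Finset.sum_congr rfl fun i _ => by ring
  refine ⟨?_, l, r, fun k => ⟨sub_nonneg.mpr (hlr k), ?_⟩, fun k => hμ k ▸ memD_lam (hlr k)⟩
  · rw [hC]
    exact Finset.sum_congr rfl fun k _ => hμ k ▸ integral_id_lam (hlr k)
  · rw [hslack]
    exact le_half_sum_of_le_sum_erase (f := fun i => r i - l i) (Finset.mem_univ k) (hineq k)
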